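/- For every nonnegative integer n, $\sum_{m=0}^{\lfloor n/2\rfloor}\binom{n}{2m}E_{n-2m}(x)(-1)^m y^{2m}=\sum_{k=0}^{n}\sum_{l=0}^{k}\sum_{m=0}^{\lfloor l/2\rfloor}S_2(n,k)\lambda^{n+l-k-2m}\binom{k}{l}E_{k-l,\lambda}(x)(-1)^m y^{2m}S_1(l,2m)$. -/

import Mathlib

open PowerSeries Finset Complex

/-- The degenerate falling factorial `(x)_{n,λ} = x(x-λ)⋯(x-(n-1)λ)`. -/
noncomputable def dff (l x : ℂ) (n : ℕ) : ℂ := ∏ j ∈ Finset.range n, (x - j * l)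

/-- Exponential generating function of a sequence: `Σ f n * t^n / n!`. -/
noncomputable def egf (f : ℕ → ℂ) : PowerSeries ℂ := PowerSeries.mk fun n => f n / n.factorial

/-- The degenerate exponential `e_λ^x(t) = (1+λt)^{x/λ} = Σ (x)_{n,λ} t^n/n!` as a power series. -/
noncomputable def degExp (l x : ℂ) : PowerSeries ℂ := egf (dff l x)

/-- The degenerate cosine `cos_λ^{(y)}(t) = cos((y/λ) log(1+λt)) = (e_λ^{iy}(t)+e_λ^{-iy}(t))/2`. -/
noncomputable def degCos (l y : ℂ) : PowerSeries ℂ :=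
  PowerSeries.C (1/2 : ℂ) * (degExp l (Complex.I * y) + degExp l (-(Complex.I * y)))

/-- The degenerate sine `sin_λ^{(y)}(t) = sin((y/λ) log(1+λt)) = (e_λ^{iy}(t)-e_λ^{-iy}(t))/(2i)`. -/
noncomputable def degSin (l y : ℂ) : PowerSeries ℂ :=
  PowerSeries.C (1/(2*Complex.I)) * (degExp l (Complex.I * y) - degExp l (-(Complex.I * y)))

/-- The exponential series `e^{at} = Σ a^n t^n/n!`. -/
noncomputable def expS (a : ℂ) : PowerSeries ℂ := egf (fun n => a ^ n)

/-- The series of `log(1+t)`. -/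
noncomputable def logS : PowerSeries ℂ := PowerSeries.mk fun n => if n = 0 then 0 else (-1)^(n+1) / n

/-!
Substituting `t ↦ (e^{λt} - 1)/λ` into an exponential generating function turns its coefficients
`f k` into `∑ₖ S₂(n,k) λ^{n-k} f k`, and maps `e_λ^a(t)` to `e^{at}` (both sides solve
`F' = a F` with `F(0) = 1`). Applied to the defining identities, it sends the generating function
of `E_{n,λ}(x)` to that of `E_n(x)` and the degenerate cosine `cos_λ^{(y)}(t)` to `cos(yt)`.
Comparing coefficients of `cos_λ^{(y)}(t) · Σ E_{n,λ}(x) tⁿ/n!` after the substitution gives the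
identity; the Stirling numbers of the first kind enter through
`(x)_{l,λ} = ∑ⱼ S₁(l,j) λ^{l-j} x^j`, read off from `e_λ^x(t) = e^{x log(1+λt)/λ}`.
-/

namespace PowerSeries

variable {R : Type*} [CommRing R]

/-- `F(λt)/λ` for `F(0) = 0`, written so that it also makes sense at `λ = 0`, where it is
`F'(0) t`. -/
noncomputable def rescaleDiv (l : R) (F : R⟦X⟧) : R⟦X⟧ := mk fun n => l ^ (n - 1) * coeff n F

lemma rescaleDiv_X_mul (l : R) (H : R⟦X⟧) : rescaleDiv l (X * H) = X * rescale l H := by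
  ext (_ | n) <;> simp [rescaleDiv, coeff_succ_X_mul]

lemma constantCoeff_rescaleDiv (l : R) (F : R⟦X⟧) :
    constantCoeff (rescaleDiv l F) = constantCoeff F := by
  simp [rescaleDiv]

lemma coeff_rescaleDiv_pow {F : R⟦X⟧} (hF : constantCoeff F = 0) (l : R) (n k : ℕ) :
    coeff n (rescaleDiv l F ^ k) = l ^ (n - k) * coeff n (F ^ k) := by
  obtain ⟨H, rfl⟩ := X_dvd_iff.mpr hF
  rw [rescaleDiv_X_mul, mul_pow, mul_pow, ← map_pow (rescale l), coeff_X_pow_mul',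
    coeff_X_pow_mul', coeff_rescale]
  split_ifs <;> simp

lemma C_mul_rescaleDiv {F : R⟦X⟧} (hF : constantCoeff F = 0) (l : R) :
    C l * rescaleDiv l F = rescale l F := by
  ext (_ | n)
  · simp [rescaleDiv, hF]
  · simp [rescaleDiv, coeff_rescale, pow_succ', mul_assoc]

lemma derivative_rescaleDiv (l : R) (F : R⟦X⟧) :
    d⁄dX R (rescaleDiv l F) = rescale l (d⁄dX R F) := by
  ext n
  simp only [rescaleDiv, coeff_derivative, coeff_mk, add_tsub_cancel_right, coeff_rescale]
  ring

lemma coeff_subst_eq_sum {b : R⟦X⟧} (hb : constantCoeff b = 0) (F : R⟦X⟧) (n : ℕ) :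
    coeff n (F.subst b) = ∑ d ∈ range (n + 1), coeff d F * coeff n (b ^ d) := by
  rw [coeff_subst' (HasSubst.of_constantCoeff_zero' hb)]
  refine finsum_eq_sum_of_support_subset _ fun d hd => ?_
  obtain ⟨H, rfl⟩ := X_dvd_iff.mpr hb
  rw [Function.mem_support, mul_pow, coeff_X_pow_mul'] at hd
  simp only [coe_range, Set.mem_Iio]
  by_contra h
  exact hd (by rw [if_neg (by omega), smul_zero])

lemma constantCoeff_subst_of_constantCoeff_zero {b : R⟦X⟧} (hb : constantCoeff b = 0)
    (F : R⟦X⟧) : constantCoeff (F.subst b) = constantCoeff F := by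
  simpa using coeff_subst_eq_sum hb F 0

lemma coeff_one_add_C_mul_X_mul_derivative (l : R) (F : R⟦X⟧) (n : ℕ) :
    coeff n ((1 + C l * X) * d⁄dX R F) = (n + 1) * coeff (n + 1) F + n * l * coeff n F := by
  rcases n with _ | n
  · simp [add_mul, mul_assoc, coeff_derivative, coeff_zero_X_mul, -coeff_zero_eq_constantCoeff]
  · simp only [add_mul, one_mul, mul_assoc, map_add, coeff_derivative, coeff_C_mul,
      coeff_succ_X_mul]
    push_cast
    ring

lemma one_add_C_mul_X_mul_derivative_eq_iff (l a : R) (F : R⟦X⟧) :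
    (1 + C l * X) * d⁄dX R F = C a * F ↔
      ∀ n : ℕ, (n + 1) * coeff (n + 1) F = (a - n * l) * coeff n F := by
  refine PowerSeries.ext_iff.trans (forall_congr' fun n => ?_)
  rw [coeff_one_add_C_mul_X_mul_derivative, coeff_C_mul]
  constructor <;> intro h <;> linear_combination h

lemma eq_of_one_add_C_mul_X_mul_derivative_eq [IsDomain R] [CharZero R] {l a : R} {F G : R⟦X⟧}
    (hF : (1 + C l * X) * d⁄dX R F = C a * F) (hG : (1 + C l * X) * d⁄dX R G = C a * G)
    (h0 : constantCoeff F = constantCoeff G) : F = G := by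
  rw [one_add_C_mul_X_mul_derivative_eq_iff] at hF hG
  ext n
  induction n with
  | zero => simpa using h0
  | succ n ih =>
    have hn : (n + 1 : R) ≠ 0 := Nat.cast_add_one_ne_zero n
    exact mul_left_cancel₀ hn (by rw [hF, hG, ih])

lemma one_add_C_mul_X_mul_derivative_subst {l l' a : R} {F b : R⟦X⟧}
    (hb : constantCoeff b = 0) (hF : (1 + C l * X) * d⁄dX R F = C a * F)
    (hDb : (1 + C l' * X) * d⁄dX R b = 1 + C l * b) :
    (1 + C l' * X) * d⁄dX R (F.subst b) = C a * F.subst b := by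
  have hs := HasSubst.of_constantCoeff_zero' hb
  have subst_C_mul {c : R} {P : R⟦X⟧} : (C c * P).subst b = C c * P.subst b := by
    rw [subst_mul hs, subst_C]; rfl
  calc (1 + C l' * X) * d⁄dX R (F.subst b)
      = (d⁄dX R F).subst b * ((1 + C l' * X) * d⁄dX R b) := by
        rw [derivative_subst hs]; ring
    _ = ((1 + C l * X) * d⁄dX R F).subst b := by
        rw [hDb, subst_mul hs, subst_add hs, subst_C_mul, subst_X hs, ← coe_substAlgHom hs,
          map_one, mul_comm]
    _ = C a * F.subst b := by rw [hF, subst_C_mul]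

end PowerSeries

open PowerSeries

lemma dff_succ (l a : ℂ) (n : ℕ) : dff l a (n + 1) = (a - n * l) * dff l a n := by
  rw [dff, prod_range_succ, mul_comm, dff]

lemma one_add_C_mul_X_mul_derivative_degExp (l a : ℂ) :
    (1 + C l * X) * d⁄dX ℂ (degExp l a) = C a * degExp l a := by
  rw [one_add_C_mul_X_mul_derivative_eq_iff]
  intro n
  simp only [degExp, egf, coeff_mk, dff_succ, Nat.factorial_succ, Nat.cast_mul]
  have : (n + 1 : ℂ) ≠ 0 := Nat.cast_add_one_ne_zero n
  have : (n.factorial : ℂ) ≠ 0 := Nat.cast_ne_zero.mpr n.factorial_ne_zero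
  field_simp
  push_cast
  ring

lemma constantCoeff_degExp (l a : ℂ) : constantCoeff (degExp l a) = 1 := by
  simp [degExp, egf, dff]

lemma dff_zero_left (a : ℂ) (n : ℕ) : dff 0 a n = a ^ n := by
  simp [dff]

lemma degExp_zero_left (a : ℂ) : degExp 0 a = expS a := by
  rw [degExp, expS, funext (dff_zero_left a)]

lemma derivative_expS_one : d⁄dX ℂ (expS 1) = expS 1 := by
  simpa [degExp_zero_left] using one_add_C_mul_X_mul_derivative_degExp 0 1

lemma constantCoeff_expS_sub_one : constantCoeff (expS 1 - 1) = 0 := by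
  simp [← degExp_zero_left, constantCoeff_degExp]

lemma constantCoeff_logS : constantCoeff logS = 0 := by
  simp [logS]

lemma coeff_succ_logS (n : ℕ) : coeff (n + 1) logS = (-1) ^ n / (n + 1) := by
  simp [logS, pow_succ]

lemma one_add_X_mul_derivative_logS : (1 + X) * d⁄dX ℂ logS = 1 := by
  ext n
  have h := coeff_one_add_C_mul_X_mul_derivative 1 logS n
  rw [map_one, one_mul] at h
  rw [h, coeff_one]
  rcases n with _ | n
  · simp [coeff_succ_logS]
  · have : (n + 1 : ℂ) ≠ 0 := Nat.cast_add_one_ne_zero n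
    have : (n + 1 + 1 : ℂ) ≠ 0 := by exact_mod_cast Nat.succ_ne_zero (n + 1)
    rw [coeff_succ_logS, coeff_succ_logS]
    push_cast
    field_simp
    ring

noncomputable def expm1Div (l : ℂ) : ℂ⟦X⟧ := rescaleDiv l (expS 1 - 1)

noncomputable def log1pDiv (l : ℂ) : ℂ⟦X⟧ := rescaleDiv l logS

lemma constantCoeff_expm1Div (l : ℂ) : constantCoeff (expm1Div l) = 0 := by
  rw [expm1Div, constantCoeff_rescaleDiv, constantCoeff_expS_sub_one]

lemma constantCoeff_log1pDiv (l : ℂ) : constantCoeff (log1pDiv l) = 0 := by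
  rw [log1pDiv, constantCoeff_rescaleDiv, constantCoeff_logS]

lemma hasSubst_expm1Div (l : ℂ) : HasSubst (expm1Div l) :=
  HasSubst.of_constantCoeff_zero' (constantCoeff_expm1Div l)

lemma subst_expm1Div_degExp (l a : ℂ) : (degExp l a).subst (expm1Div l) = expS a := by
  have hDb : (1 + C 0 * X) * d⁄dX ℂ (expm1Div l) = 1 + C l * expm1Div l := by
    rw [expm1Div, C_mul_rescaleDiv constantCoeff_expS_sub_one, derivative_rescaleDiv, map_sub,
      derivative_expS_one, derivative_one, sub_zero, map_sub, map_one]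
    simp
  rw [← degExp_zero_left a]
  refine eq_of_one_add_C_mul_X_mul_derivative_eq (one_add_C_mul_X_mul_derivative_subst
    (constantCoeff_expm1Div l) (one_add_C_mul_X_mul_derivative_degExp l a) hDb)
    (one_add_C_mul_X_mul_derivative_degExp 0 a) ?_
  rw [constantCoeff_subst_of_constantCoeff_zero (constantCoeff_expm1Div l),
    constantCoeff_degExp, constantCoeff_degExp]

lemma subst_log1pDiv_expS (l a : ℂ) : (expS a).subst (log1pDiv l) = degExp l a := by
  have hDb : (1 + C l * X) * d⁄dX ℂ (log1pDiv l) = 1 + C 0 * log1pDiv l := by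
    have := congrArg (rescale l) one_add_X_mul_derivative_logS
    rw [map_zero, zero_mul, add_zero]
    rwa [map_mul, map_add, map_one, rescale_X, ← derivative_rescaleDiv] at this
  rw [← degExp_zero_left a]
  refine eq_of_one_add_C_mul_X_mul_derivative_eq (one_add_C_mul_X_mul_derivative_subst
    (constantCoeff_log1pDiv l) (one_add_C_mul_X_mul_derivative_degExp 0 a) hDb)
    (one_add_C_mul_X_mul_derivative_degExp l a) ?_
  rw [constantCoeff_subst_of_constantCoeff_zero (constantCoeff_log1pDiv l),
    constantCoeff_degExp, constantCoeff_degExp]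

lemma subst_expm1Div_degCos (l y : ℂ) : (degCos l y).subst (expm1Div l) = degCos 0 y := by
  have hs := hasSubst_expm1Div l
  rw [degCos, degCos, subst_mul hs, subst_add hs, subst_expm1Div_degExp, subst_expm1Div_degExp,
    degExp_zero_left, degExp_zero_left, subst_C]
  rfl

lemma subst_expm1Div_eq_of_mul_eq {l x : ℂ} {E Ed : ℕ → ℂ}
    (hE : egf E * (expS (1/2) + expS (-(1/2))) = 2 * expS x)
    (hEd : egf Ed * (degExp l (1/2) + degExp l (-(1/2))) = 2 * degExp l x) :
    (egf Ed).subst (expm1Div l) = egf E := by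
  have hne : expS (1/2) + expS (-(1/2)) ≠ 0 := fun h => by
    simpa [← degExp_zero_left, constantCoeff_degExp] using congrArg constantCoeff h
  have h := congrArg (subst (expm1Div l)) hEd
  rw [← coe_substAlgHom (hasSubst_expm1Div l)] at h
  simp only [map_mul, map_add, map_ofNat, coe_substAlgHom, subst_expm1Div_degExp] at h
  exact mul_right_cancel₀ hne (h.trans hE.symm)

noncomputable def egfCoeff (F : ℂ⟦X⟧) (n : ℕ) : ℂ := n.factorial * coeff n F

lemma egfCoeff_egf (f : ℕ → ℂ) (n : ℕ) : egfCoeff (egf f) n = f n := by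
  have : (n.factorial : ℂ) ≠ 0 := Nat.cast_ne_zero.mpr n.factorial_ne_zero
  simp only [egfCoeff, egf, coeff_mk]
  field_simp

lemma egfCoeff_mul (F G : ℂ⟦X⟧) (n : ℕ) :
    egfCoeff (F * G) n =
      ∑ j ∈ range (n + 1), (n.choose j : ℂ) * egfCoeff F j * egfCoeff G (n - j) := by
  rw [egfCoeff, coeff_mul, Nat.sum_antidiagonal_eq_sum_range_succ_mk, mul_sum]
  refine sum_congr rfl fun j hj => ?_
  rw [egfCoeff, egfCoeff, ← Nat.choose_mul_factorial_mul_factorial (mem_range_succ_iff.mp hj)]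
  push_cast
  ring

lemma egfCoeff_degCos (l y : ℂ) (n : ℕ) :
    egfCoeff (degCos l y) n = (dff l (I * y) n + dff l (-(I * y)) n) / 2 := by
  have : (n.factorial : ℂ) ≠ 0 := Nat.cast_ne_zero.mpr n.factorial_ne_zero
  simp only [degCos, egfCoeff, coeff_C_mul, map_add, degExp, egf, coeff_mk]
  field_simp

lemma Finset.sum_range_succ_eq_sum_even {M : Type*} [AddCommMonoid M] (f : ℕ → M)
    (hf : ∀ j, Odd j → f j = 0) (N : ℕ) :
    ∑ j ∈ range (N + 1), f j = ∑ m ∈ range (N / 2 + 1), f (2 * m) := by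
  rw [← sum_image (g := (2 * ·)) fun _ _ _ _ h => by simpa using h]
  have hsub : (range (N / 2 + 1)).image (2 * ·) ⊆ range (N + 1) := fun j => by
    simp only [mem_image, mem_range, forall_exists_index, and_imp]
    omega
  refine (sum_subset hsub fun j hjN hj => hf j ?_).symm
  simp only [mem_image, mem_range, not_exists, not_and] at hjN hj
  exact Nat.not_even_iff_odd.mp fun ⟨m, hm⟩ => hj m (by omega) (by omega)

lemma sum_range_mul_add_neg_pow_div_two (f : ℕ → ℂ) (b : ℂ) (N : ℕ) :
    ∑ j ∈ range (N + 1), f j * ((b ^ j + (-b) ^ j) / 2) =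
      ∑ m ∈ range (N / 2 + 1), f (2 * m) * b ^ (2 * m) := by
  rw [Finset.sum_range_succ_eq_sum_even _ fun j hj => by simp [hj.neg_pow]]
  simp [(even_two_mul _).neg_pow]

lemma I_mul_pow_two_mul (y : ℂ) (m : ℕ) : (I * y) ^ (2 * m) = (-1) ^ m * y ^ (2 * m) := by
  rw [pow_mul, pow_mul, mul_pow, I_sq, neg_one_mul, neg_pow]

lemma egfCoeff_degCos_zero_mul_egf (y : ℂ) (E : ℕ → ℂ) (n : ℕ) :
    egfCoeff (degCos 0 y * egf E) n =
      ∑ m ∈ range (n / 2 + 1), (n.choose (2 * m) : ℂ) * E (n - 2 * m) * (-1) ^ m * y ^ (2 * m) := by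
  simp only [egfCoeff_mul, egfCoeff_degCos, dff_zero_left, egfCoeff_egf]
  rw [sum_congr rfl fun j _ => mul_right_comm _ _ _,
    sum_range_mul_add_neg_pow_div_two fun j => (n.choose j : ℂ) * E (n - j)]
  simp only [I_mul_pow_two_mul]
  exact sum_congr rfl fun m _ => by ring

section Stirling1

variable {S1 : ℕ → ℕ → ℂ}
  (hS1 : ∀ j, logS ^ j = PowerSeries.C (Nat.factorial j : ℂ) * egf (fun k => S1 k j))
include hS1

lemma dff_eq_sum_stirling1 (l a : ℂ) (n : ℕ) :
    dff l a n = ∑ j ∈ range (n + 1), S1 n j * l ^ (n - j) * a ^ j := by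
  have h := congrArg (egfCoeff · n) (subst_log1pDiv_expS l a)
  simp only [degExp, egfCoeff_egf] at h
  rw [← h, egfCoeff, coeff_subst_eq_sum (constantCoeff_log1pDiv l), mul_sum]
  refine sum_congr rfl fun j _ => ?_
  have : (n.factorial : ℂ) ≠ 0 := Nat.cast_ne_zero.mpr n.factorial_ne_zero
  have : (j.factorial : ℂ) ≠ 0 := Nat.cast_ne_zero.mpr j.factorial_ne_zero
  rw [log1pDiv, coeff_rescaleDiv_pow constantCoeff_logS, hS1, coeff_C_mul, expS, egf, coeff_mk,
    egf, coeff_mk]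
  field_simp

lemma egfCoeff_degCos_eq_sum_stirling1 (l y : ℂ) (n : ℕ) :
    egfCoeff (degCos l y) n =
      ∑ m ∈ range (n / 2 + 1), S1 n (2 * m) * l ^ (n - 2 * m) * ((-1) ^ m * y ^ (2 * m)) := by
  rw [egfCoeff_degCos, dff_eq_sum_stirling1 hS1, dff_eq_sum_stirling1 hS1, ← sum_add_distrib,
    sum_div]
  simp_rw [← mul_add, mul_div_assoc]
  rw [sum_range_mul_add_neg_pow_div_two (fun j => S1 n j * l ^ (n - j))]
  simp [I_mul_pow_two_mul]

end Stirling1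

section Stirling2

variable {S2 : ℕ → ℕ → ℂ}
  (hS2 : ∀ k, (expS 1 - 1) ^ k = PowerSeries.C (Nat.factorial k : ℂ) * egf (fun n => S2 n k))
include hS2

lemma egfCoeff_subst_expm1Div (l : ℂ) (F : ℂ⟦X⟧) (n : ℕ) :
    egfCoeff (F.subst (expm1Div l)) n =
      ∑ k ∈ range (n + 1), S2 n k * l ^ (n - k) * egfCoeff F k := by
  rw [egfCoeff, coeff_subst_eq_sum (constantCoeff_expm1Div l), mul_sum]
  refine sum_congr rfl fun k _ => ?_
  have : (n.factorial : ℂ) ≠ 0 := Nat.cast_ne_zero.mpr n.factorial_ne_zero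
  rw [expm1Div, coeff_rescaleDiv_pow constantCoeff_expS_sub_one, hS2, coeff_C_mul, egf, coeff_mk,
    egfCoeff]
  field_simp

end Stirling2

theorem stmt17 (lam x y : ℝ) (E Ed : ℕ → ℂ) (S1 S2 : ℕ → ℕ → ℂ)
    (hE : egf E * (expS (1/2) + expS (-(1/2))) = 2 * expS x)
    (hEd : egf Ed * (degExp lam (1/2) + degExp lam (-(1/2))) = 2 * degExp lam x)
    (hS1 : ∀ j, logS ^ j = PowerSeries.C (Nat.factorial j : ℂ) * egf (fun k => S1 k j))
    (hS2 : ∀ k, (expS 1 - 1) ^ k = PowerSeries.C (Nat.factorial k : ℂ) * egf (fun n => S2 n k))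
    (n : ℕ) :
    ∑ m ∈ Finset.range (n/2+1), (n.choose (2*m) : ℂ) * E (n-2*m) * (-1)^m * (y:ℂ)^(2*m) =
      ∑ k ∈ Finset.range (n+1), ∑ l ∈ Finset.range (k+1), ∑ m ∈ Finset.range (l/2+1),
        S2 n k * (lam:ℂ)^(n+l-k-2*m) * (k.choose l : ℂ) * Ed (k-l) * (-1)^m * (y:ℂ)^(2*m) *
          S1 l (2*m) := by
  have key : (degCos lam y * egf Ed).subst (expm1Div lam) = degCos 0 y * egf E := by
    rw [subst_mul (hasSubst_expm1Div _), subst_expm1Div_degCos,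
      subst_expm1Div_eq_of_mul_eq hE hEd]
  rw [← egfCoeff_degCos_zero_mul_egf, ← key, egfCoeff_subst_expm1Div hS2]
  refine sum_congr rfl fun k hk => ?_
  rw [egfCoeff_mul, mul_sum]
  refine sum_congr rfl fun l hl => ?_
  rw [egfCoeff_degCos_eq_sum_stirling1 hS1, egfCoeff_egf, mul_sum, sum_mul, mul_sum]
  refine sum_congr rfl fun m hm => ?_
  simp only [mem_range] at hk hl hm
  rw [show n + l - k - 2 * m = (n - k) + (l - 2 * m) by omega, pow_add]
  ring
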